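/- arXiv:2403.05681 — 2 statements merged into one kernel-verified Lean document; each statement's English description precedes it below -/
import Mathlib

section
/- Amplification by subsampling: let M^β be the mechanism that first includes each record of the input dataset independently with probability β (Poisson subsampling) and then applies M to the sampled dataset. If M^{β1} satisfies (ε1, δ1)-DP, then for any β2 < β1 the mechanism M^{β2} satisfies (ε2, δ2)-DP with ε2 = ln(1 + (β2/β1)(e^{ε1} − 1)) and δ2 = (β2/β1)·δ1. -/
open scoped ENNReal

/-- `(ε, δ)`-differential privacy with respect to a neighboring relation `N`. -/
def ADP {D Ω : Type*} (N : D → D → Prop) (M : D → PMF Ω) (ε δ : ℝ) : Prop :=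
  ∀ d d', N d d' → ∀ O : Set Ω,
    (M d).toOuterMeasure O ≤
      ENNReal.ofReal (Real.exp ε) * (M d').toOuterMeasure O + ENNReal.ofReal δ

/-- Neighboring datasets differ by addition or removal of one record. -/
def Neighbor {X : Type*} (d d' : List X) : Prop :=
  ∃ l₁ l₂ x, (d = l₁ ++ x :: l₂ ∧ d' = l₁ ++ l₂) ∨ (d' = l₁ ++ x :: l₂ ∧ d = l₁ ++ l₂)

/-- Poisson subsampling: each record of the dataset is included independently with
probability `β`. -/
noncomputable def poissonSample {X : Type*} (β : ℝ≥0∞) (h : β ≤ 1) :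
    List X → PMF (List X)
  | [] => PMF.pure []
  | x :: xs => (PMF.bernoulli β.toNNReal (by simpa using ENNReal.toNNReal_mono ENNReal.one_ne_top h)).bind fun b =>
      (poissonSample β h xs).map fun s => if b then x :: s else s

/-!
Poisson subsampling at rate `γ * β₁` is subsampling at rate `γ = β₂ / β₁` followed by subsampling
at rate `β₁`, so the `β₂`-mechanism is the `β₁`-mechanism run on a `γ`-subsample. For neighbours
`l₁ ++ x :: l₂` and `l₁ ++ l₂`, the `γ`-subsample of the larger one drops `x` with probability
`1 - γ` and is then distributed like that of the smaller one; so the probability `P` of an event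
on the larger dataset is the mixture `(1 - γ) U + γ V` of the probability `U` on the smaller one
and the probability `V` with `x` forced into the subsample. Averaging the hypothesis over the
subsample gives `V ≤ exp ε₁ U + δ₁` and `U ≤ exp ε₁ V + δ₁`, and both `P ≤ (1 + γ (exp ε₁ - 1)) U + γ δ₁`
and `U ≤ (1 + γ (exp ε₁ - 1)) P + γ δ₁` follow by elementary manipulation of the mixture.
-/

namespace PMF

variable {α β : Type*}

noncomputable def expect (p : PMF α) (f : α → ℝ≥0∞) : ℝ≥0∞ := ∑' a, p a * f a

theorem expect_pure (a : α) (f : α → ℝ≥0∞) : (pure a).expect f = f a := by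
  rw [expect, tsum_eq_single a fun b hb => by simp [pure_apply, hb]]
  simp

theorem expect_bind (p : PMF α) (g : α → PMF β) (f : β → ℝ≥0∞) :
    (p.bind g).expect f = p.expect fun a => (g a).expect f := by
  simp only [expect, bind_apply, ← ENNReal.tsum_mul_right, ← ENNReal.tsum_mul_left, mul_assoc]
  exact ENNReal.tsum_comm

theorem expect_map (p : PMF α) (g : α → β) (f : β → ℝ≥0∞) :
    (p.map g).expect f = p.expect (f ∘ g) := by
  simp only [← bind_pure_comp, expect_bind, Function.comp_apply, expect_pure]
  rfl

set_option linter.deprecated false in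
theorem expect_bernoulli (q : NNReal) (hq : q ≤ 1) (f : Bool → ℝ≥0∞) :
    (bernoulli q hq).expect f = (1 - q) * f false + q * f true := by
  simp [expect, bernoulli_apply, add_comm]

theorem expect_add (p : PMF α) (f g : α → ℝ≥0∞) :
    (p.expect fun a => f a + g a) = p.expect f + p.expect g := by
  simp only [expect, mul_add, ENNReal.tsum_add]

theorem expect_const_mul (p : PMF α) (c : ℝ≥0∞) (f : α → ℝ≥0∞) :
    (p.expect fun a => c * f a) = c * p.expect f := by
  simp only [expect, mul_left_comm _ c, ENNReal.tsum_mul_left]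

theorem expect_le_mul_add (p : PMF α) {f g : α → ℝ≥0∞} {c δ : ℝ≥0∞}
    (h : ∀ a, f a ≤ c * g a + δ) : p.expect f ≤ c * p.expect g + δ :=
  calc p.expect f ≤ p.expect fun a => c * g a + δ :=
        ENNReal.tsum_le_tsum fun a => by gcongr; exact h a
    _ = c * p.expect g + δ := by
        simp only [expect, mul_add, ENNReal.tsum_add, mul_left_comm _ c, ENNReal.tsum_mul_left,
          ENNReal.tsum_mul_right, tsum_coe, one_mul]

theorem toOuterMeasure_bind_apply_eq_expect (p : PMF α) (g : α → PMF β) (s : Set β) :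
    (p.bind g).toOuterMeasure s = p.expect fun a => (g a).toOuterMeasure s :=
  toOuterMeasure_bind_apply p g s

end PMF

namespace ENNReal

variable {p q u v e δ : ℝ≥0∞}

-- `1 + e` plays the role of `exp ε`, which keeps truncated subtraction out of `ℝ≥0∞`.
theorem mix_le_of_le (hpq : p + q = 1) (h : v ≤ (1 + e) * u + δ) :
    p * u + q * v ≤ (1 + q * e) * u + q * δ :=
  calc p * u + q * v ≤ p * u + q * ((1 + e) * u + δ) := by gcongr
    _ = (p + q) * u + q * e * u + q * δ := by ring
    _ = (1 + q * e) * u + q * δ := by rw [hpq]; ring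

theorem le_mix_of_le (hpq : p + q = 1) (h : u ≤ (1 + e) * v + δ) :
    u ≤ (1 + q * e) * (p * u + q * v) + q * δ := by
  have hmin : min u v ≤ p * u + q * v :=
    calc min u v = (p + q) * min u v := by rw [hpq, one_mul]
      _ ≤ p * u + q * v := by rw [add_mul]; gcongr <;> simp
  have hu : u ≤ v + e * min u v + δ := by
    rcases le_total u v with huv | hvu
    · exact huv.trans (by rw [add_assoc]; exact le_self_add)
    · rwa [min_eq_right hvu, ← one_add_mul]
  calc u = p * u + q * u := by rw [← add_mul, hpq, one_mul]
    _ ≤ p * u + q * (v + e * (p * u + q * v) + δ) := by gcongr; exact hu.trans (by gcongr)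
    _ = (1 + q * e) * (p * u + q * v) + q * δ := by ring

theorem ofReal_exp_eq_one_add {ε : ℝ} (hε : 0 ≤ ε) :
    ENNReal.ofReal (Real.exp ε) = 1 + ENNReal.ofReal (Real.exp ε - 1) := by
  rw [← ENNReal.ofReal_one, ← ENNReal.ofReal_add zero_le_one (by simpa using hε), add_sub_cancel]

theorem ofReal_exp_log_one_add_toReal_mul {γ : ℝ≥0∞} (hγ : γ ≠ ∞) {c : ℝ} (hc : 0 ≤ c) :
    ENNReal.ofReal (Real.exp (Real.log (1 + γ.toReal * c))) = 1 + γ * ENNReal.ofReal c := by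
  have hγc : 0 ≤ γ.toReal * c := mul_nonneg ENNReal.toReal_nonneg hc
  rw [Real.exp_log (by linarith), ENNReal.ofReal_add zero_le_one hγc, ENNReal.ofReal_one,
    ENNReal.ofReal_mul ENNReal.toReal_nonneg, ENNReal.ofReal_toReal hγ]

end ENNReal

section PoissonSample

open PMF

variable {X : Type*}

theorem expect_poissonSample_nil (β : ℝ≥0∞) (h : β ≤ 1) (f : List X → ℝ≥0∞) :
    (poissonSample β h []).expect f = f [] :=
  expect_pure _ f

theorem expect_poissonSample_cons (β : ℝ≥0∞) (h : β ≤ 1) (x : X) (xs : List X)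
    (f : List X → ℝ≥0∞) :
    (poissonSample β h (x :: xs)).expect f =
      (1 - β) * (poissonSample β h xs).expect f +
        β * (poissonSample β h xs).expect fun s => f (x :: s) := by
  rw [poissonSample, expect_bind]
  refine (expect_bernoulli _ _ _).trans ?_
  rw [ENNReal.coe_toNNReal (ne_top_of_le_ne_top ENNReal.one_ne_top h)]
  simp only [expect_map]
  rfl

theorem expect_poissonSample_append (β : ℝ≥0∞) (h : β ≤ 1) (l₁ l₂ : List X)
    (f : List X → ℝ≥0∞) :
    (poissonSample β h (l₁ ++ l₂)).expect f =
      (poissonSample β h l₁).expect fun s₁ => (poissonSample β h l₂).expect fun s₂ =>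
        f (s₁ ++ s₂) := by
  induction l₁ generalizing f with
  | nil => simp only [List.nil_append, expect_poissonSample_nil]
  | cons x xs ih => simp only [List.cons_append, expect_poissonSample_cons, ih]

theorem expect_poissonSample_insert (β : ℝ≥0∞) (h : β ≤ 1) (l₁ l₂ : List X) (x : X)
    (f : List X → ℝ≥0∞) :
    (poissonSample β h (l₁ ++ x :: l₂)).expect f =
      (1 - β) * (poissonSample β h (l₁ ++ l₂)).expect f +
        β * (poissonSample β h l₁).expect fun s₁ => (poissonSample β h l₂).expect fun s₂ =>
          f (s₁ ++ x :: s₂) := by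
  simp only [expect_poissonSample_append, expect_poissonSample_cons]
  rw [← expect_const_mul, ← expect_const_mul, ← expect_add]

theorem expect_poissonSample_mul {γ β : ℝ≥0∞} (hγ : γ ≤ 1) (hβ : β ≤ 1) (h : γ * β ≤ 1)
    (d : List X) (f : List X → ℝ≥0∞) :
    (poissonSample (γ * β) h d).expect f =
      (poissonSample γ hγ d).expect fun t => (poissonSample β hβ t).expect f := by
  induction d generalizing f with
  | nil => simp only [expect_poissonSample_nil]
  | cons x xs ih =>
    have hγβ : 1 - γ * β = 1 - γ + γ * (1 - β) := by
      rw [ENNReal.mul_sub fun _ _ => ne_top_of_le_ne_top ENNReal.one_ne_top hγ, mul_one,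
        tsub_add_tsub_cancel hγ (mul_le_of_le_one_right' hβ)]
    simp only [expect_poissonSample_cons, expect_add, expect_const_mul, ih]
    rw [hγβ]
    ring

theorem poissonSample_mul {γ β : ℝ≥0∞} (hγ : γ ≤ 1) (hβ : β ≤ 1) (h : γ * β ≤ 1)
    (d : List X) :
    poissonSample (γ * β) h d = (poissonSample γ hγ d).bind (poissonSample β hβ) := by
  classical
  ext t
  simpa [expect, bind_apply] using
    expect_poissonSample_mul hγ hβ h d fun s => if s = t then 1 else 0

theorem expect_poissonSample_le_of_neighbor {γ : ℝ≥0∞} (hγ : γ ≤ 1) {f : List X → ℝ≥0∞}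
    {e δ : ℝ≥0∞} (hf : ∀ d d', Neighbor d d' → f d ≤ (1 + e) * f d' + δ) {d d' : List X}
    (hN : Neighbor d d') :
    (poissonSample γ hγ d).expect f ≤ (1 + γ * e) * (poissonSample γ hγ d').expect f + γ * δ := by
  have hγ' : 1 - γ + γ = 1 := tsub_add_cancel_of_le hγ
  obtain ⟨l₁, l₂, x, ⟨rfl, rfl⟩ | ⟨rfl, rfl⟩⟩ := hN
  · rw [expect_poissonSample_insert, expect_poissonSample_append]
    refine ENNReal.mix_le_of_le hγ' ?_
    exact expect_le_mul_add _ fun s₁ => expect_le_mul_add _ fun s₂ =>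
      hf _ _ ⟨s₁, s₂, x, .inl ⟨rfl, rfl⟩⟩
  · rw [expect_poissonSample_insert, expect_poissonSample_append]
    refine ENNReal.le_mix_of_le hγ' ?_
    exact expect_le_mul_add _ fun s₁ => expect_le_mul_add _ fun s₂ =>
      hf _ _ ⟨s₁, s₂, x, .inr ⟨rfl, rfl⟩⟩

end PoissonSample

theorem amplification_by_subsampling_general {X Ω : Type*} (M : List X → PMF Ω)
    (β₁ β₂ : ℝ≥0∞) (h₁ : β₁ ≤ 1) (h₂ : β₂ < β₁)
    (ε₁ δ₁ : ℝ) (hε₁ : 0 ≤ ε₁)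
    (H : ADP Neighbor (fun d => (poissonSample β₁ h₁ d).bind M) ε₁ δ₁) :
    ADP Neighbor (fun d => (poissonSample β₂ (h₂.le.trans h₁) d).bind M)
      (Real.log (1 + (β₂ / β₁).toReal * (Real.exp ε₁ - 1)))
      ((β₂ / β₁).toReal * δ₁) := by
  have hβ₁ : β₁ ≠ 0 := (h₂.trans_le' zero_le).ne'
  have hβ₁' : β₁ ≠ ∞ := ne_top_of_le_ne_top ENNReal.one_ne_top h₁
  obtain ⟨γ, hγ, rfl⟩ : ∃ γ ≤ 1, β₂ = γ * β₁ :=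
    ⟨β₂ / β₁, ENNReal.div_le_of_le_mul (by simpa using h₂.le),
      (ENNReal.div_mul_cancel hβ₁ hβ₁').symm⟩
  have hγ' : γ ≠ ∞ := ne_top_of_le_ne_top ENNReal.one_ne_top hγ
  intro d d' hN O
  rw [ENNReal.mul_div_cancel_right hβ₁ hβ₁',
    ENNReal.ofReal_exp_log_one_add_toReal_mul hγ' (sub_nonneg.2 (Real.one_le_exp hε₁)),
    ENNReal.ofReal_mul ENNReal.toReal_nonneg, ENNReal.ofReal_toReal hγ']
  simp only [poissonSample_mul hγ h₁, PMF.bind_bind]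
  rw [PMF.toOuterMeasure_bind_apply_eq_expect, PMF.toOuterMeasure_bind_apply_eq_expect]
  refine expect_poissonSample_le_of_neighbor hγ (fun t t' ht => ?_) hN
  rw [← ENNReal.ofReal_exp_eq_one_add hε₁]
  exact H t t' ht O

/-- Amplification by subsampling: if the mechanism `M` subsampled at rate `β₁` is
`(ε₁, δ₁)`-DP, then for any `β₂ < β₁` the mechanism subsampled at rate `β₂` is
`(ε₂, δ₂)`-DP with `ε₂ = log (1 + (β₂/β₁)(exp ε₁ − 1))` and `δ₂ = (β₂/β₁) δ₁`. -/
theorem amplification_by_subsampling {X Ω : Type*} (M : List X → PMF Ω)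
    (β₁ β₂ : ℝ≥0∞) (h₁ : β₁ ≤ 1) (h₂ : β₂ < β₁)
    (ε₁ δ₁ : ℝ) (hε₁ : 0 ≤ ε₁) (hδ₁ : 0 ≤ δ₁)
    (H : ADP Neighbor (fun d => (poissonSample β₁ h₁ d).bind M) ε₁ δ₁) :
    ADP Neighbor (fun d => (poissonSample β₂ (h₂.le.trans h₁) d).bind M)
      (Real.log (1 + (β₂ / β₁).toReal * (Real.exp ε₁ - 1)))
      ((β₂ / β₁).toReal * δ₁) :=
  amplification_by_subsampling_general M β₁ β₂ h₁ h₂ ε₁ δ₁ hε₁ H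
end

section
/- The Laplace mechanism is ε-differentially private: for a function f : datasets → ℝ^c with ℓ1-sensitivity Δf = max over neighboring datasets D, D' of ||f(D) − f(D')||_1, the mechanism M(D) = f(D) + (v_1,...,v_c) with v_i drawn i.i.d. from the Laplace distribution with scale Δf/ε satisfies ε-DP. -/
/-!
The noise vector has the product density `∏ i, exp (-|xᵢ| / b) / (2b)`, and the output
distributions of the mechanism are its translates by `f d` and `f d'`. By the triangle inequality
in each coordinate, the density centred at `f d` is pointwise at most
`exp (‖f d - f d'‖₁ / b)` times the one centred at `f d'`, and this factor is at most `exp ε`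
for `b = Δ / ε`; integrating the pointwise bound over `S` gives the claim.
-/

open MeasureTheory
open scoped ENNReal

noncomputable def laplaceMeasure (b : ℝ) : Measure ℝ :=
  volume.withDensity fun x => ENNReal.ofReal (Real.exp (-|x| / b) / (2 * b))

namespace MeasureTheory

variable {E : Type*} [MeasurableSpace E]

theorem lintegral_fin_nat_prod_eq_prod {n : ℕ} {μ : Fin n → Measure E}
    [∀ i, SigmaFinite (μ i)] {f : Fin n → E → ℝ≥0∞} (hf : ∀ i, Measurable (f i)) :
    ∫⁻ x, ∏ i, f i (x i) ∂(Measure.pi μ) = ∏ i, ∫⁻ x, f i x ∂(μ i) := by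
  induction n with
  | zero => simp
  | succ n ih =>
      calc
        _ = ∫⁻ x : E × (Fin n → E), f 0 x.1 * ∏ i : Fin n, f i.succ (x.2 i)
            ∂((μ 0).prod (Measure.pi fun i ↦ μ i.succ)) := by
          rw [← ((measurePreserving_piFinSuccAbove μ 0).symm).lintegral_comp_emb
            (MeasurableEquiv.measurableEmbedding _)]
          simp_rw [MeasurableEquiv.piFinSuccAbove_symm_apply, Fin.insertNthEquiv,
            Fin.prod_univ_succ, Fin.insertNth_zero, Equiv.coe_fn_mk, Fin.cons_succ,
            Fin.zero_succAbove, cast_eq, Fin.cons_zero]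
        _ = (∫⁻ x, f 0 x ∂μ 0) * ∏ i : Fin n, ∫⁻ x, f i.succ x ∂(μ i.succ) := by
          rw [← ih fun i ↦ hf i.succ]
          exact lintegral_prod_mul (hf 0).aemeasurable (Finset.measurable_prod _
            fun (i : Fin n) _ ↦ (hf i.succ).comp (measurable_pi_apply i)).aemeasurable
        _ = ∏ i, ∫⁻ x, f i x ∂(μ i) := by rw [Fin.prod_univ_succ]

theorem lintegral_fintype_prod_eq_prod {ι : Type*} [Fintype ι] {μ : ι → Measure E}
    [∀ i, SigmaFinite (μ i)] {f : ι → E → ℝ≥0∞} (hf : ∀ i, Measurable (f i)) :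
    ∫⁻ x, ∏ i, f i (x i) ∂(Measure.pi μ) = ∏ i, ∫⁻ x, f i x ∂(μ i) := by
  let e := (Fintype.equivFin ι).symm
  rw [← (measurePreserving_piCongrLeft _ e).lintegral_comp_emb
    (MeasurableEquiv.measurableEmbedding _)]
  simp_rw [← e.prod_comp, MeasurableEquiv.coe_piCongrLeft, Equiv.piCongrLeft_apply_apply]
  exact lintegral_fin_nat_prod_eq_prod fun i ↦ hf (e i)

theorem Measure.pi_withDensity {ι : Type*} [Fintype ι] (μ : ι → Measure E)
    [∀ i, SigmaFinite (μ i)] {f : ι → E → ℝ≥0∞} (hf : ∀ i, Measurable (f i))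
    [∀ i, SigmaFinite ((μ i).withDensity (f i))] :
    Measure.pi (fun i ↦ (μ i).withDensity (f i)) =
      (Measure.pi μ).withDensity fun x ↦ ∏ i, f i (x i) := by
  refine Measure.pi_eq fun s hs ↦ ?_
  have hbox : (Set.univ.pi s).indicator (fun x ↦ ∏ i, f i (x i)) =
      fun x ↦ ∏ i, (s i).indicator (f i) (x i) := by
    ext x
    by_cases hx : x ∈ Set.univ.pi s
    · rw [Set.indicator_of_mem hx]
      exact Finset.prod_congr rfl fun i _ ↦ (Set.indicator_of_mem (hx i trivial) _).symm
    · obtain ⟨i, hi⟩ := not_forall.mp (Set.mem_univ_pi.not.mp hx)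
      rw [Set.indicator_of_notMem hx,
        Finset.prod_eq_zero (Finset.mem_univ i) (Set.indicator_of_notMem hi _)]
  rw [withDensity_apply _ (.univ_pi hs), ← lintegral_indicator (.univ_pi hs), hbox,
    lintegral_fintype_prod_eq_prod fun i ↦ (hf i).indicator (hs i)]
  simp_rw [lintegral_indicator (hs _), withDensity_apply _ (hs _)]

theorem Measure.map_add_left_withDensity {G : Type*} [MeasurableSpace G] [AddGroup G]
    [MeasurableAdd G] (μ : Measure G) [μ.IsAddLeftInvariant] (a : G) {f : G → ℝ≥0∞}
    (hf : Measurable f) :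
    (μ.withDensity f).map (a + ·) = μ.withDensity fun x ↦ f (-a + x) := by
  ext s hs
  have hadd : Measurable (a + · : G → G) := measurable_const_add a
  rw [Measure.map_apply hadd hs, withDensity_apply _ (hadd hs), withDensity_apply _ hs,
    ← (measurePreserving_add_left μ a).setLIntegral_comp_preimage hs
      (f := fun x ↦ f (-a + x)) (hf.comp (measurable_const_add (-a)))]
  simp_rw [neg_add_cancel_left]

end MeasureTheory

noncomputable def laplacePDF (b x : ℝ) : ℝ≥0∞ :=
  ENNReal.ofReal (Real.exp (-|x| / b) / (2 * b))

@[fun_prop]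
theorem measurable_laplacePDF (b : ℝ) : Measurable (laplacePDF b) := by
  unfold laplacePDF; fun_prop

theorem laplacePDF_le_mul {b : ℝ} (hb : 0 < b) (x y : ℝ) :
    laplacePDF b x ≤ ENNReal.ofReal (Real.exp (|x - y| / b)) * laplacePDF b y := by
  rw [laplacePDF, laplacePDF, ← ENNReal.ofReal_mul (Real.exp_pos _).le, ← mul_div_assoc,
    ← Real.exp_add]
  have : |y| ≤ |x - y| + |x| := by simpa [abs_sub_comm] using abs_sub_le y x 0
  gcongr
  rw [← add_div, div_le_div_iff_of_pos_right hb]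
  linarith

theorem prod_laplacePDF_le_mul {ι : Type*} [Fintype ι] {b : ℝ} (hb : 0 < b) (x y : ι → ℝ) :
    ∏ i, laplacePDF b (x i) ≤
      ENNReal.ofReal (Real.exp ((∑ i, |x i - y i|) / b)) * ∏ i, laplacePDF b (y i) := by
  rw [Finset.sum_div, Real.exp_sum, ENNReal.ofReal_prod_of_nonneg fun i _ ↦ (Real.exp_pos _).le,
    ← Finset.prod_mul_distrib]
  exact Finset.prod_le_prod' fun i _ ↦ laplacePDF_le_mul hb (x i) (y i)

theorem pi_laplaceMeasure_eq_withDensity (ι : Type*) [Fintype ι] (b : ℝ) :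
    Measure.pi (fun _ : ι ↦ laplaceMeasure b) =
      volume.withDensity fun x ↦ ∏ i, laplacePDF b (x i) :=
  Measure.pi_withDensity _ fun _ ↦ measurable_laplacePDF b

theorem pi_laplaceMeasure_map_add_le {ι : Type*} [Fintype ι] {b : ℝ} (hb : 0 < b)
    (a a' : ι → ℝ) :
    (Measure.pi fun _ : ι ↦ laplaceMeasure b).map (a + ·) ≤
      ENNReal.ofReal (Real.exp ((∑ i, |a i - a' i|) / b)) •
        (Measure.pi fun _ : ι ↦ laplaceMeasure b).map (a' + ·) := by
  have hdens : Measurable fun x : ι → ℝ ↦ ∏ i, laplacePDF b (x i) := by fun_prop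
  rw [pi_laplaceMeasure_eq_withDensity,
    Measure.map_add_left_withDensity _ _ hdens, Measure.map_add_left_withDensity _ _ hdens,
    ← withDensity_smul' _ _ ENNReal.ofReal_ne_top]
  refine withDensity_mono (ae_of_all _ fun x ↦ ?_)
  refine (prod_laplacePDF_le_mul hb (-a + x) (-a' + x)).trans_eq ?_
  simp [neg_add_eq_sub, abs_sub_comm]

/-- The Laplace mechanism is `ε`-differentially private: for `f : D → ℝ^c` with
ℓ1-sensitivity at most `Δ` over neighboring datasets, the mechanism
`M d = f d + (v₁, ..., v_c)` with the `vᵢ` i.i.d. `Lap(Δ/ε)` satisfies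
`P[M d ∈ S] ≤ exp ε * P[M d' ∈ S]` for all neighboring `d, d'` and measurable `S`. -/
theorem laplace_mechanism_dp {D : Type*} (N : D → D → Prop) (c : ℕ)
    (f : D → (Fin c → ℝ)) (Δ ε : ℝ) (hΔ : 0 < Δ) (hε : 0 < ε)
    (hsens : ∀ d d', N d d' → ∑ i, |f d i - f d' i| ≤ Δ)
    (M : D → Measure (Fin c → ℝ))
    (hM : ∀ d, M d =
      (Measure.pi fun _ : Fin c => laplaceMeasure (Δ / ε)).map fun v => f d + v) :
    ∀ d d', N d d' → ∀ S : Set (Fin c → ℝ), MeasurableSet S →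
      M d S ≤ ENNReal.ofReal (Real.exp ε) * M d' S := by
  intro d d' hN S _
  have hb : 0 < Δ / ε := div_pos hΔ hε
  have hloss : (∑ i, |f d i - f d' i|) / (Δ / ε) ≤ ε :=
    calc (∑ i, |f d i - f d' i|) / (Δ / ε) ≤ Δ / (Δ / ε) := by gcongr; exact hsens d d' hN
      _ = ε := by field_simp
  rw [hM, hM]
  calc _ ≤ ENNReal.ofReal (Real.exp ((∑ i, |f d i - f d' i|) / (Δ / ε))) *
        (Measure.pi fun _ : Fin c ↦ laplaceMeasure (Δ / ε)).map (f d' + ·) S :=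
      pi_laplaceMeasure_map_add_le hb (f d) (f d') S
    _ ≤ _ := by gcongr
end
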